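/- arXiv:2502.06762 — 4 statements merged into one kernel-verified Lean document; each statement's English description precedes it below -/
import Mathlib

section
/- Let S be a semigroup and T ⊆ S a Green's equivalence class (i.e., a class of the relation a ∼ b where a ≼ b and b ≼ a, with a ≼ b meaning there exist c₁, c₂ with c₁b = a and bc₂ = a). Then T is a subgroup of S if and only if T contains an idempotent element. -/
/-- Green's preorder on a semigroup: `a ≼ b` iff `c₁ * b = a = b * c₂` for some `c₁, c₂`. -/
def GreenLe {S : Type*} [Semigroup S] (a b : S) : Prop :=
  ∃ c₁ c₂ : S, c₁ * b = a ∧ b * c₂ = a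

/-- Green's equivalence `∼`. -/
def GreenEqv {S : Type*} [Semigroup S] (a b : S) : Prop :=
  GreenLe a b ∧ GreenLe b a

/-- `T` is a subgroup of the semigroup `S` (as a subset): closed under multiplication,
has a two-sided identity element on `T`, and two-sided inverses. -/
def IsSubgroupSet {S : Type*} [Mul S] (T : Set S) : Prop :=
  (∀ a ∈ T, ∀ b ∈ T, a * b ∈ T) ∧
  ∃ e ∈ T, (∀ a ∈ T, e * a = a ∧ a * e = a) ∧ (∀ a ∈ T, ∃ b ∈ T, a * b = e ∧ b * a = e)

lemma GreenLe.trans' {S : Type*} [Semigroup S] {a b c : S}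
    (h1 : GreenLe a b) (h2 : GreenLe b c) : GreenLe a c := by
  obtain ⟨x₁, x₂, hx1, hx2⟩ := h1
  obtain ⟨y₁, y₂, hy1, hy2⟩ := h2
  exact ⟨x₁ * y₁, y₂ * x₂, by rw [mul_assoc, hy1, hx1], by rw [← mul_assoc, hy2, hx2]⟩

lemma GreenEqv.symm' {S : Type*} [Semigroup S] {a b : S} (h : GreenEqv a b) : GreenEqv b a :=
  ⟨h.2, h.1⟩

lemma GreenEqv.trans' {S : Type*} [Semigroup S] {a b c : S}
    (h1 : GreenEqv a b) (h2 : GreenEqv b c) : GreenEqv a c :=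
  ⟨h1.1.trans' h2.1, h2.2.trans' h1.2⟩

theorem green_class_subgroup_iff_idempotent {S : Type*} [Semigroup S] (T : Set S)
    (hT : ∃ a : S, T = {b | GreenEqv a b}) :
    IsSubgroupSet T ↔ ∃ d ∈ T, d * d = d := by
  obtain ⟨a, rfl⟩ := hT
  constructor
  · rintro ⟨-, e, he, hid, -⟩
    exact ⟨e, he, (hid e he).1⟩
  · rintro ⟨d, hd, hdd⟩
    -- membership characterization via d
    have hmem : ∀ b, b ∈ {b | GreenEqv a b} ↔ GreenEqv d b := by
      intro b
      constructor
      · intro hb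
        exact (GreenEqv.symm' hd).trans' hb
      · intro hb
        exact hd.trans' hb
    -- d is a two-sided identity on the class
    have hidl : ∀ b, GreenEqv d b → d * b = b := by
      rintro b ⟨-, e₁, e₂, h1, h2⟩
      calc d * b = d * (d * e₂) := by rw [h2]
        _ = d * d * e₂ := by rw [mul_assoc]
        _ = b := by rw [hdd, h2]
    have hidr : ∀ b, GreenEqv d b → b * d = b := by
      rintro b ⟨-, e₁, e₂, h1, h2⟩
      calc b * d = e₁ * d * d := by rw [h1]
        _ = e₁ * (d * d) := by rw [mul_assoc]
        _ = b := by rw [hdd, h1]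
    -- closure
    have hclos : ∀ b, GreenEqv d b → ∀ b', GreenEqv d b' → GreenEqv d (b * b') := by
      intro b hb b' hb'
      obtain ⟨⟨c₁, c₂, hc1, hc2⟩, ⟨e₁, e₂, he1, he2⟩⟩ := id hb
      obtain ⟨⟨c₁', c₂', hc1', hc2'⟩, ⟨e₁', e₂', he1', he2'⟩⟩ := id hb'
      constructor
      · refine ⟨c₁' * c₁, c₂' * c₂, ?_, ?_⟩
        · calc c₁' * c₁ * (b * b') = c₁' * (c₁ * b * b') := by
                rw [mul_assoc, mul_assoc]
            _ = c₁' * (d * b') := by rw [hc1]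
            _ = c₁' * b' := by rw [hidl b' hb']
            _ = d := hc1'
        · calc b * b' * (c₂' * c₂) = b * (b' * c₂') * c₂ := by
                rw [mul_assoc, mul_assoc, mul_assoc]
            _ = b * d * c₂ := by rw [hc2']
            _ = b * c₂ := by rw [hidr b hb]
            _ = d := hc2
      · refine ⟨b * e₁', e₂ * b', ?_, ?_⟩
        · calc b * e₁' * d = b * (e₁' * d) := by rw [mul_assoc]
            _ = b * b' := by rw [he1']
        · calc d * (e₂ * b') = d * e₂ * b' := by rw [mul_assoc]
            _ = b * b' := by rw [he2]
    refine ⟨?_, d, hd, ?_, ?_⟩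
    · intro b hb b' hb'
      exact (hmem _).2 (hclos b ((hmem b).1 hb) b' ((hmem b').1 hb'))
    · intro b hb
      have h := (hmem b).1 hb
      exact ⟨hidl b h, hidr b h⟩
    · intro b hb
      have h := (hmem b).1 hb
      obtain ⟨⟨c₁, c₂, hc1, hc2⟩, -⟩ := id h
      have hbd := hidr b h
      have hdb := hidl b h
      set u := d * c₁ * d with hu
      have hub : u * b = d := by
        calc u * b = d * (c₁ * (d * b)) := by
              rw [hu, mul_assoc, mul_assoc]
          _ = d * (c₁ * b) := by rw [hdb]
          _ = d * d := by rw [hc1]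
          _ = d := hdd
      set v := d * c₂ * d with hv
      have hbv : b * v = d := by
        calc b * v = b * d * c₂ * d := by rw [hv, ← mul_assoc, ← mul_assoc]
          _ = b * c₂ * d := by rw [hbd]
          _ = d * d := by rw [hc2]
          _ = d := hdd
      have hud : u * d = u := by rw [hu, mul_assoc, mul_assoc, hdd, ← mul_assoc]
      have hdv : d * v = v := by rw [hv, ← mul_assoc, ← mul_assoc, hdd]
      have huv : u = v := by
        calc u = u * d := hud.symm
          _ = u * (b * v) := by rw [hbv]
          _ = (u * b) * v := (mul_assoc u b v).symm
          _ = d * v := by rw [hub]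
          _ = v := hdv
      have hbu : b * u = d := by rw [huv]; exact hbv
      have hdu : d * u = u := by rw [huv]; exact hdv
      have humem : GreenEqv d u := by
        constructor
        · exact ⟨b, b, hbu, hub⟩
        · exact ⟨u, u, hud, hdu⟩
      exact ⟨u, (hmem u).2 humem, hbu, hub⟩
end

section
/- If M is a finitely generated commutative monoid in which every element belongs to a subgroup (i.e., M is completely regular), then the set of idempotent elements of M is finite. -/
/-- An element belongs to a subgroup of the monoid. -/
def MemSubgroup {M : Type*} [Monoid M] (a : M) : Prop :=
  ∃ T : Set M, IsSubgroupSet T ∧ a ∈ T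

theorem MemSubgroup.exists_mul_eq_and_dvd {M : Type*} [Monoid M] {a : M} (ha : MemSubgroup a) :
    ∃ e, e * a = a ∧ a ∣ e := by
  obtain ⟨T, ⟨-, e, heT, hid, hinv⟩, haT⟩ := ha
  obtain ⟨b, -, hab, -⟩ := hinv a haT
  exact ⟨e, (hid a haT).1, b, hab.symm⟩

namespace Submonoid

theorem finite_closure_of_isIdempotentElem {M : Type*} [CommMonoid M] {s : Finset M}
    (hs : ∀ a ∈ s, IsIdempotentElem a) : (closure (s : Set M) : Set M).Finite := by
  classical
  refine (s.powerset.image fun t => ∏ a ∈ t, a).finite_toSet.subset ?_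
  intro x hx
  obtain ⟨n, -, rfl⟩ := mem_closure_finset.mp hx
  refine Finset.mem_image.mpr ⟨s.filter (n · ≠ 0), Finset.mem_powerset.mpr (s.filter_subset _), ?_⟩
  rw [Finset.prod_filter]
  refine Finset.prod_congr rfl fun a ha => ?_
  by_cases hn : n a = 0
  · simp [hn]
  · simp [hn, (hs a ha).pow_eq hn]

end Submonoid

section GroupIdentity

variable {M : Type*} [CommMonoid M]

theorem isIdempotentElem_of_mul_eq_of_dvd {a e : M} (hea : e * a = a) (hae : a ∣ e) :
    IsIdempotentElem e := by
  obtain ⟨b, hb⟩ := hae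
  change e * e = e
  nth_rw 2 [hb]
  rw [← mul_assoc, hea, ← hb]

theorem eq_of_mul_eq_of_dvd {a e f : M} (hea : e * a = a) (hae : a ∣ e) (hfa : f * a = a)
    (haf : a ∣ f) : e = f := by
  obtain ⟨b, rfl⟩ := hae
  obtain ⟨c, rfl⟩ := haf
  calc a * b = a * c * a * b := by rw [hfa]
    _ = a * b * a * c := by ac_rfl
    _ = a * c := by rw [hea]

noncomputable def groupIdentityHom (h : ∀ a : M, ∃ e, e * a = a ∧ a ∣ e) : M →* M where
  toFun a := (h a).choose
  map_one' := eq_of_mul_eq_of_dvd (h 1).choose_spec.1 (h 1).choose_spec.2 (one_mul 1) dvd_rfl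
  map_mul' x y := by
    obtain ⟨hx, hx'⟩ := (h x).choose_spec
    obtain ⟨hy, hy'⟩ := (h y).choose_spec
    refine eq_of_mul_eq_of_dvd (h (x * y)).choose_spec.1 (h (x * y)).choose_spec.2 ?_
      (mul_dvd_mul hx' hy')
    rw [mul_mul_mul_comm, hx, hy]

variable (h : ∀ a : M, ∃ e, e * a = a ∧ a ∣ e)

theorem isIdempotentElem_groupIdentityHom (a : M) : IsIdempotentElem (groupIdentityHom h a) :=
  isIdempotentElem_of_mul_eq_of_dvd (h a).choose_spec.1 (h a).choose_spec.2

theorem groupIdentityHom_apply_of_isIdempotentElem {a : M} (ha : IsIdempotentElem a) :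
    groupIdentityHom h a = a :=
  eq_of_mul_eq_of_dvd (h a).choose_spec.1 (h a).choose_spec.2 ha.eq dvd_rfl

end GroupIdentity

theorem idempotents_finite_of_fg_completely_regular {M : Type*} [CommMonoid M]
    (hfg : ∃ S : Finset M, Submonoid.closure (S : Set M) = ⊤)
    (hreg : ∀ a : M, MemSubgroup a) :
    {a : M | a * a = a}.Finite := by
  classical
  obtain ⟨S, hS⟩ := hfg
  have h a := (hreg a).exists_mul_eq_and_dvd
  refine (Submonoid.finite_closure_of_isIdempotentElem (s := S.image (groupIdentityHom h))
    (Finset.forall_mem_image.mpr fun a _ => isIdempotentElem_groupIdentityHom h a)).subset ?_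
  intro a ha
  rw [Finset.coe_image, ← MonoidHom.map_mclosure, hS, ← MonoidHom.mrange_eq_map]
  exact ⟨a, groupIdentityHom_apply_of_isIdempotentElem h ha⟩
end

section
/- Let M be a finite commutative monoid. The map π† : M → M given by a ↦ a·d_a, where d_a is the unique idempotent positive power of a, is a monoid homomorphism onto the submonoid of regular elements, and satisfies π† ∘ π† = π†. -/
private lemma pow_stable {M : Type*} [Monoid M] {a : M} {m p : ℕ}
    (h : a ^ (m + p) = a ^ m) : ∀ t, a ^ (m + t * p) = a ^ m := by
  intro t
  induction t with
  | zero => simp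
  | succ t ih =>
      rw [show m + (t + 1) * p = m + t * p + p from by ring, pow_add, ih, ← pow_add, h]

private lemma exists_idem_pow {M : Type*} [Monoid M] [Finite M] (a : M) :
    ∃ k : ℕ, 0 < k ∧ IsIdempotentElem (a ^ k) := by
  obtain ⟨i, j, hne, hij⟩ := Finite.exists_ne_map_eq_of_infinite (fun n : ℕ => a ^ (n + 1))
  wlog hlt : i < j generalizing i j
  · exact this j i hne.symm hij.symm (by omega)
  set p := j - i with hp
  have hp0 : 0 < p := by omega
  have hstep : ∀ m, i + 1 ≤ m → a ^ (m + p) = a ^ m := by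
    intro m hm
    have h1 : a ^ (i + 1 + p) = a ^ (i + 1) := by
      rw [show i + 1 + p = j + 1 from by omega]; exact hij.symm
    calc a ^ (m + p) = a ^ (i + 1 + p) * a ^ (m - (i + 1)) := by
          rw [← pow_add]; congr 1; omega
      _ = a ^ (i + 1) * a ^ (m - (i + 1)) := by rw [h1]
      _ = a ^ m := by rw [← pow_add]; congr 1; omega
  set k := (i + 1) * p with hk
  have hk1 : i + 1 ≤ k := Nat.le_mul_of_pos_right _ hp0
  refine ⟨k, by positivity, ?_⟩
  unfold IsIdempotentElem
  rw [← pow_add, show k + k = k + (i + 1) * p from by rw [hk],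
    pow_stable (hstep k hk1) (i + 1)]

/-- a common exponent making every power idempotent -/
private lemma exists_common_idem_pow (M : Type*) [Monoid M] [Finite M] :
    ∃ N : ℕ, 0 < N ∧ ∀ a : M, IsIdempotentElem (a ^ N) := by
  cases nonempty_fintype M
  classical
  choose k hk hidem using fun a : M => exists_idem_pow a
  refine ⟨Finset.univ.lcm k, ?_, ?_⟩
  · rcases Nat.eq_zero_or_pos (Finset.univ.lcm k) with h | h
    · rw [Finset.lcm_eq_zero_iff] at h
      obtain ⟨a, -, ha⟩ := h
      exact absurd ha (hk a).ne'
    · exact h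
  · intro a
    obtain ⟨t, ht⟩ := Finset.dvd_lcm (f := k) (Finset.mem_univ a)
    rw [ht, pow_mul]
    exact (hidem a).pow t

theorem regular_projection_hom {M : Type*} [CommMonoid M] [Finite M] :
    ∃ π : M → M,
      (∀ a : M, ∃ n : ℕ, 0 < n ∧ (a ^ n * a ^ n = a ^ n) ∧ π a = a * a ^ n) ∧
      π 1 = 1 ∧
      (∀ a b : M, π (a * b) = π a * π b) ∧
      (∀ a : M, π (π a) = π a) ∧
      Set.range π = {a : M | MemSubgroup a} := by
  obtain ⟨N, hN, hI⟩ := exists_common_idem_pow M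
  refine ⟨fun a => a * a ^ N, fun a => ⟨N, hN, hI a, rfl⟩, by simp, ?_, ?_, ?_⟩
  · intro a b
    simp only [mul_pow]
    rw [mul_mul_mul_comm]
  · intro a
    have h1 : (a ^ N) ^ N = a ^ N := by
      have := (hI a).pow_succ_eq (N - 1)
      rwa [show N - 1 + 1 = N from by omega] at this
    simp only [mul_pow]
    rw [h1, hI a, mul_assoc, hI a]
  · ext a
    simp only [Set.mem_range, Set.mem_setOf_eq]
    constructor
    · rintro ⟨b, rfl⟩
      have hkey : ∀ m : ℕ, b ^ N * b ^ (N * m) = b ^ N := by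
        intro m
        calc b ^ N * b ^ (N * m) = b ^ N * (b ^ N) ^ m := by rw [pow_mul]
          _ = (b ^ N) ^ (m + 1) := by rw [pow_succ, mul_comm]
          _ = b ^ N := (hI b).pow_succ_eq m
      refine ⟨Set.range (fun m : ℕ => b ^ N * b ^ m), ⟨?_, b ^ N, ⟨0, by simp⟩, ?_, ?_⟩,
        1, show b ^ N * b ^ 1 = b * b ^ N from by rw [pow_one, mul_comm]⟩
      · rintro - ⟨m, rfl⟩ - ⟨m', rfl⟩
        refine ⟨m + m', ?_⟩
        show b ^ N * b ^ (m + m') = b ^ N * b ^ m * (b ^ N * b ^ m')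
        rw [mul_mul_mul_comm, hI b, pow_add]
      · rintro - ⟨m, rfl⟩
        constructor
        · rw [← mul_assoc, hI b]
        · rw [mul_right_comm, hI b]
      · rintro - ⟨m, rfl⟩
        have hab : b ^ N * b ^ m * (b ^ N * b ^ (m * (N - 1))) = b ^ N := by
          rw [mul_mul_mul_comm, hI b, ← pow_add,
            show m + m * (N - 1) = N * m from by
              obtain ⟨n, rfl⟩ := Nat.exists_eq_succ_of_ne_zero hN.ne'
              simp only [Nat.succ_sub_one, Nat.succ_mul, Nat.mul_comm m n]
              omega,
            hkey]
        exact ⟨b ^ N * b ^ (m * (N - 1)), ⟨m * (N - 1), rfl⟩, hab, by rw [mul_comm]; exact hab⟩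
    · rintro ⟨T, ⟨hclosed, e, heT, hid, hinv⟩, haT⟩
      refine ⟨a, ?_⟩
      have hpow : ∀ n : ℕ, a ^ (n + 1) ∈ T := by
        intro n
        induction n with
        | zero => simpa using haT
        | succ n ih => rw [pow_succ]; exact hclosed _ ih _ haT
      have haN : a ^ N ∈ T := by
        have := hpow (N - 1)
        rwa [show N - 1 + 1 = N from by omega] at this
      obtain ⟨c, hcT, hc1, hc2⟩ := hinv _ haN
      have he : a ^ N = e := by
        calc a ^ N = a ^ N * e := ((hid _ haN).2).symm
          _ = a ^ N * (a ^ N * c) := by rw [hc1]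
          _ = (a ^ N * a ^ N) * c := (mul_assoc _ _ _).symm
          _ = a ^ N * c := by rw [hI a]
          _ = e := hc1
      rw [he]
      exact (hid a haT).2
end

section
/- Let M be a finite commutative completely regular monoid. For every subset R ⊆ M and all n ∈ ℕ, |R^{⊗n}| ≤ |R^{⊗(n+1)}|, where R^{⊗n} = {a₁⋯aₙ : aᵢ ∈ R}. -/
open Pointwise

private lemma pow_cyc {M : Type*} [CommMonoid M] {x : M} {k : ℕ} (h : x ^ (k + 1) = x) :
    ∀ m, x ^ (k * m + 1) = x := by
  intro m
  induction m with
  | zero => simp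
  | succ m ih =>
    have e1 : k * (m + 1) + 1 = (k * m + 1) + k := by ring
    calc x ^ (k * (m + 1) + 1) = x ^ (k * m + 1) * x ^ k := by rw [e1, pow_add]
      _ = x * x ^ k := by rw [ih]
      _ = x ^ (k + 1) := by rw [pow_succ, mul_comm]
      _ = x := h

private lemma exists_period {M : Type*} [CommMonoid M] [Finite M]
    (hreg : ∀ a : M, MemSubgroup a) (x : M) : ∃ k, 1 ≤ k ∧ x ^ (k + 1) = x := by
  obtain ⟨T, ⟨hmul, e, heT, hid, hinv⟩, hxT⟩ := hreg x
  obtain ⟨b, hbT, hxb, _⟩ := hinv x hxT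
  -- x = x^(p+1) * b^p for all p
  have hstep : ∀ p, x ^ (p + 1) * b ^ p = x := by
    intro p
    induction p with
    | zero => simp
    | succ p ih =>
      calc x ^ (p + 1 + 1) * b ^ (p + 1)
          = (x ^ (p + 1) * b ^ p) * (x * b) := by
            rw [pow_succ x (p + 1), pow_succ b p]
            rw [mul_assoc, mul_assoc]
            congr 1
            exact mul_left_comm x (b ^ p) b
        _ = x * e := by rw [ih, hxb]
        _ = x := by rw [mul_comm]; exact (hid x hxT).1
  -- pigeonhole
  obtain ⟨i, j, hne, hij⟩ := Finite.exists_ne_map_eq_of_infinite (fun n : ℕ => x ^ n)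
  have main : ∀ i j : ℕ, i < j → x ^ i = x ^ j → x ^ (j - i + 1) = x := by
    intro i j h hij
    calc x ^ (j - i + 1) = x ^ (j - i) * x := pow_succ x _
      _ = x ^ (j - i) * (x ^ (i + 1) * b ^ i) := by rw [hstep]
      _ = x ^ (j - i + (i + 1)) * b ^ i := by rw [← mul_assoc, ← pow_add]
      _ = x ^ (j + 1) * b ^ i := by congr 2; omega
      _ = x ^ j * x * b ^ i := by rw [pow_succ]
      _ = x ^ i * x * b ^ i := by rw [hij]
      _ = x ^ (i + 1) * b ^ i := by rw [pow_succ]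
      _ = x := hstep i
  rcases hne.lt_or_gt with h | h
  · exact ⟨j - i, by omega, main i j h hij⟩
  · exact ⟨i - j, by omega, main j i h hij.symm⟩

private lemma exists_uniform_period {M : Type*} [CommMonoid M] [Finite M]
    (hreg : ∀ a : M, MemSubgroup a) : ∃ N, 1 ≤ N ∧ ∀ x : M, x ^ (N + 1) = x := by
  classical
  cases nonempty_fintype M
  choose k hk1 hk using exists_period hreg
  refine ⟨∏ x : M, k x, ?_, ?_⟩
  · exact Finset.one_le_prod' (fun x _ => hk1 x)
  · intro x
    obtain ⟨m, hm⟩ := Finset.dvd_prod_of_mem k (Finset.mem_univ x)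
    rw [hm]
    exact pow_cyc (hk x) m

theorem card_setPow_mono {M : Type*} [CommMonoid M] [Finite M]
    (hreg : ∀ a : M, MemSubgroup a) (R : Set M) (n : ℕ) (hn : 1 ≤ n) :
    (R ^ n).ncard ≤ (R ^ (n + 1)).ncard := by
  classical
  obtain ⟨N, hN1, hN⟩ := exists_uniform_period hreg
  obtain ⟨N', rfl⟩ : ∃ N', N = N' + 1 := ⟨N - 1, by omega⟩
  -- every x in R^n absorbs a^(N'+1) for some a ∈ R
  have key : ∀ x ∈ R ^ n, ∃ a ∈ R, a ^ (N' + 1) * x = x := by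
    intro x hx
    obtain ⟨m, rfl⟩ : ∃ m, n = m + 1 := ⟨n - 1, by omega⟩
    rw [pow_succ'] at hx
    obtain ⟨a, ha, y, hy, rfl⟩ := hx
    refine ⟨a, ha, ?_⟩
    rw [← mul_assoc, ← pow_succ, hN]
  -- a^(N'+1) * x = x implies a^(N'+1) * x^(N'+1) = x^(N'+1)
  have absorb : ∀ a x : M, a ^ (N' + 1) * x = x →
      a ^ (N' + 1) * x ^ (N' + 1) = x ^ (N' + 1) := by
    intro a x hax
    calc a ^ (N' + 1) * x ^ (N' + 1)
        = a ^ (N' + 1) * (x * x ^ N') := by rw [pow_succ' x N']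
      _ = (a ^ (N' + 1) * x) * x ^ N' := by rw [mul_assoc]
      _ = x * x ^ N' := by rw [hax]
      _ = x ^ (N' + 1) := (pow_succ' x N').symm
  -- choice function per idempotent class
  let A : M → M := fun c => if h : ∃ a ∈ R, a ^ (N' + 1) * c = c then h.choose else 1
  have hA : ∀ c, (∃ a ∈ R, a ^ (N' + 1) * c = c) →
      A c ∈ R ∧ (A c) ^ (N' + 1) * c = c := by
    intro c h
    simp only [A, dif_pos h]
    exact ⟨h.choose_spec.1, h.choose_spec.2⟩
  have hex : ∀ x ∈ R ^ n, ∃ a ∈ R, a ^ (N' + 1) * x ^ (N' + 1) = x ^ (N' + 1) := by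
    intro x hx
    obtain ⟨a, ha, hax⟩ := key x hx
    exact ⟨a, ha, absorb a x hax⟩
  have habs : ∀ x ∈ R ^ n, A (x ^ (N' + 1)) ^ (N' + 1) * x = x := by
    intro x hx
    have hc := (hA _ (hex x hx)).2
    calc A (x ^ (N' + 1)) ^ (N' + 1) * x
        = A (x ^ (N' + 1)) ^ (N' + 1) * (x ^ (N' + 1) * x) := by rw [← pow_succ, hN]
      _ = (A (x ^ (N' + 1)) ^ (N' + 1) * x ^ (N' + 1)) * x := by rw [mul_assoc]
      _ = x ^ (N' + 1) * x := by rw [hc]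
      _ = x := by rw [← pow_succ, hN]
  have hmem : ∀ x ∈ R ^ n, A (x ^ (N' + 1)) ∈ R := fun x hx => (hA _ (hex x hx)).1
  have hNpow : ∀ x ∈ R ^ n,
      (A (x ^ (N' + 1)) * x) ^ (N' + 1) = x ^ (N' + 1) := by
    intro x hx
    rw [mul_pow]
    exact (hA _ (hex x hx)).2
  refine Set.ncard_le_ncard_of_injOn (fun x => A (x ^ (N' + 1)) * x) ?_ ?_ (Set.toFinite _)
  · intro x hx
    rw [pow_succ' R n]
    exact Set.mul_mem_mul (hmem x hx) hx
  · intro x hx x' hx' heq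
    dsimp only at heq
    have hcc : x ^ (N' + 1) = x' ^ (N' + 1) := by
      rw [← hNpow x hx, ← hNpow x' hx', heq]
    have h1 : A (x' ^ (N' + 1)) * x = A (x' ^ (N' + 1)) * x' := by rw [← hcc, heq, hcc]
    have h2 : A (x' ^ (N' + 1)) ^ (N' + 1) * x = x := by rw [← hcc]; exact habs x hx
    have h3 : A (x' ^ (N' + 1)) ^ (N' + 1) * x' = x' := habs x' hx'
    set a := A (x' ^ (N' + 1)) with ha
    calc x = a ^ (N' + 1) * x := h2.symm
      _ = a ^ N' * (a * x) := by rw [← mul_assoc, ← pow_succ]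
      _ = a ^ N' * (a * x') := by rw [h1]
      _ = a ^ (N' + 1) * x' := by rw [← mul_assoc, ← pow_succ]
      _ = x' := h3
end
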